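/- arXiv:1301.2450 — 4 statements merged into one kernel-verified Lean document; each statement's English description precedes it below -/
import Mathlib

section
/- Let (c,e) define a canonical family of strategies (x_λ) as above. Then for every A ∈ {−1,0,1}^{Ω×I} and a ∈ ℤ, the limit L(A,a) = lim_{λ→0⁺} λ^a ∏_{(ω,i)} x_λ^i(ω)^{A(ω,i)} exists in [0,+∞], and L(A,a) = 0 iff a + Σ_{(ω,i)} A(ω,i) e(ω,i) > 0; L(A,a) = +∞ iff a + Σ_{(ω,i)} A(ω,i) e(ω,i) < 0; and L(A,a) = ∏_{(ω,i)} c(ω,i)^{A(ω,i)} ∈ (0,∞) iff a + Σ_{(ω,i)} A(ω,i) e(ω,i) = 0. Consequently, for any sequence λ_n → 0, the sequence (λ_n, x_{λ_n}) is regular. -/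
open Filter Topology Finset
open scoped ENNReal

/-- The monomial `λ^a ∏_{(ω,i)} x^i(ω)^{A(ω,i)}`, evaluated in `[0,+∞]` with the
conventions `0^0 = 1`, `0^β = 0` and `0^{-β} = +∞` for `β > 0`. -/
noncomputable def monoVal {Ω I : Type*} [Fintype Ω] [Fintype I]
    (lam : ℝ) (x : Ω → I → ℝ) (A : Ω × I → ℤ) (a : ℤ) : ℝ≥0∞ :=
  (ENNReal.ofReal lam) ^ a * ∏ p : Ω × I, (ENNReal.ofReal (x p.1 p.2)) ^ (A p)

/-- Membership of `(A,a)` in the index set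
`M = { (A,a) | A ∈ {-1,0,1}^{Ω×I}, |a| ≤ |Ω| }`. -/
def memM (Ω I : Type*) [Fintype Ω] [Fintype I] (A : Ω × I → ℤ) (a : ℤ) : Prop :=
  (∀ p, A p = -1 ∨ A p = 0 ∨ A p = 1) ∧ a.natAbs ≤ Fintype.card Ω

/-- A sequence `(λ_n, x_n)` of discount factors and stationary strategies is regular if
`λ_n → 0` and for every `(A,a) ∈ M` the limit `L(A,a) = lim_n λ_n^a ∏ x_n^i(ω)^{A(ω,i)}`
exists in `[0,+∞]`. -/
def IsRegularSeq {Ω I : Type*} [Fintype Ω] [Fintype I]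
    (lam : ℕ → ℝ) (x : ℕ → Ω → I → ℝ) : Prop :=
  Tendsto lam atTop (𝓝 0) ∧
  ∀ A a, memM Ω I A a →
    ∃ l : ℝ≥0∞, Tendsto (fun n => monoVal (lam n) (x n) A a) atTop (𝓝 l)

/-- The canonical stationary strategy induced by coefficients `c` and exponents `e`:
`x_λ^i(ω) = c(ω,i) λ^{e(ω,i)} / Σ_{i'} c(ω,i') λ^{e(ω,i')}`. -/
noncomputable def xcan {Ω I : Type*} [Fintype I]
    (c e : Ω → I → ℝ) (lam : ℝ) (ω : Ω) (i : I) : ℝ :=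
  c ω i * lam ^ (e ω i) / ∑ i', c ω i' * lam ^ (e ω i')

/-!
For `λ > 0` every factor of the monomial is positive, and writing `D_ω(λ) = Σ_i c(ω,i) λ^{e(ω,i)}`
for the normaliser of `x_λ(ω)`, the monomial equals
`λ^{a + Σ A e} · ∏ c^A · ∏ D_ω(λ)^{-A(ω,i)}`.
Since `e ≥ 0`, `D_ω(λ)` tends to the total weight `Σ_{e(ω,i) = 0} c(ω,i) = 1` of the
zero-exponent actions, so the last product tends to `1` and the behaviour of the monomial is
that of `λ^{a + Σ A e}` times the positive constant `∏ c^A`.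
-/

theorem ENNReal.ofReal_zpow_of_pos {x : ℝ} (hx : 0 < x) (n : ℤ) :
    ENNReal.ofReal (x ^ n) = ENNReal.ofReal x ^ n := by
  rw [← Real.rpow_intCast, ← ENNReal.rpow_intCast, ENNReal.ofReal_rpow_of_pos hx]

theorem ENNReal.ofReal_prod_zpow_of_pos {ι : Type*} {s : Finset ι} {f : ι → ℝ}
    (hf : ∀ i ∈ s, 0 < f i) (n : ι → ℤ) :
    ENNReal.ofReal (∏ i ∈ s, f i ^ n i) = ∏ i ∈ s, ENNReal.ofReal (f i) ^ n i := by
  rw [ENNReal.ofReal_prod_of_nonneg fun i hi => (_root_.zpow_pos (hf i hi) _).le]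
  exact prod_congr rfl fun i hi => ENNReal.ofReal_zpow_of_pos (hf i hi) _

section RpowMulLimit

variable {f : ℝ → ℝ} {C E : ℝ}

theorem tendsto_rpow_mul_nhdsGT_zero_atTop (hC : 0 < C) (hf : Tendsto f (𝓝[>] 0) (𝓝 C))
    (hE : E < 0) : Tendsto (fun l => l ^ E * f l) (𝓝[>] 0) atTop :=
  (tendsto_rpow_neg_nhdsGT_zero hE).atTop_mul_pos hC hf

theorem tendsto_rpow_mul_nhdsGT_zero_zero (hf : Tendsto f (𝓝[>] 0) (𝓝 C)) (hE : 0 < E) :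
    Tendsto (fun l => l ^ E * f l) (𝓝[>] 0) (𝓝 0) := by
  have hpow : Tendsto (fun l : ℝ => l ^ E) (𝓝[>] 0) (𝓝 0) := by
    simpa [Real.zero_rpow hE.ne'] using
      (Real.continuousAt_rpow_const 0 E (Or.inr hE.le)).tendsto.mono_left nhdsWithin_le_nhds
  simpa using hpow.mul hf

theorem exists_tendsto_ofReal_rpow_mul_nhdsGT_zero (hC : 0 < C)
    (hf : Tendsto f (𝓝[>] 0) (𝓝 C)) (E : ℝ) :
    ∃ L : ℝ≥0∞, Tendsto (fun l => ENNReal.ofReal (l ^ E * f l)) (𝓝[>] 0) (𝓝 L) ∧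
      (L = 0 ↔ 0 < E) ∧ (L = ⊤ ↔ E < 0) ∧
      ((L = ENNReal.ofReal C ∧ L ≠ 0 ∧ L ≠ ⊤) ↔ E = 0) := by
  have hC' : ENNReal.ofReal C ≠ 0 := by simpa using hC
  rcases lt_trichotomy E 0 with hE | rfl | hE
  · refine ⟨⊤, ENNReal.tendsto_ofReal_atTop.comp (tendsto_rpow_mul_nhdsGT_zero_atTop hC hf hE),
      ?_, ?_, ?_⟩ <;> simp [hE, hE.not_gt, hE.ne]
  · refine ⟨ENNReal.ofReal C, ENNReal.tendsto_ofReal (by simpa using hf), ?_⟩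
    simp [hC']
  · refine ⟨0, ?_, ?_, ?_, ?_⟩
    · simpa using ENNReal.tendsto_ofReal (tendsto_rpow_mul_nhdsGT_zero_zero hf hE)
    all_goals simp [hE, hE.not_gt, hE.ne']

end RpowMulLimit

theorem tendsto_sum_mul_rpow_nhds_zero {I : Type*} [Fintype I] (c : I → ℝ) {e : I → ℝ}
    (he : ∀ i, 0 ≤ e i) :
    Tendsto (fun l : ℝ => ∑ i, c i * l ^ e i) (𝓝 0)
      (𝓝 (∑ i ∈ univ.filter (fun i => e i = 0), c i)) := by
  have hlim : Tendsto (fun l : ℝ => ∑ i, c i * l ^ e i) (𝓝 0) (𝓝 (∑ i, c i * 0 ^ e i)) :=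
    tendsto_finsetSum _ fun i _ =>
      tendsto_const_nhds.mul (Real.continuousAt_rpow_const 0 (e i) (Or.inr (he i))).tendsto
  convert hlim using 2
  rw [sum_filter]
  refine sum_congr rfl fun i _ => ?_
  by_cases h : e i = 0 <;> simp [h, Real.zero_rpow]

section xcan

variable {Ω I : Type*} [Fintype I] {c e : Ω → I → ℝ} {l : ℝ}

theorem xcan_pos (hc : ∀ ω i, 0 < c ω i) (hl : 0 < l) (ω : Ω) (i : I) :
    0 < xcan c e l ω i :=
  div_pos (mul_pos (hc ω i) (Real.rpow_pos_of_pos hl _))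
    (sum_pos (fun j _ => mul_pos (hc ω j) (Real.rpow_pos_of_pos hl _)) ⟨i, mem_univ i⟩)

theorem xcan_zpow (hl : 0 ≤ l) (ω : Ω) (i : I) (n : ℤ) :
    xcan c e l ω i ^ n =
      c ω i ^ n * l ^ (n * e ω i) * (∑ i', c ω i' * l ^ e ω i') ^ (-n) := by
  rw [xcan, zpow_neg, div_zpow, mul_zpow, div_eq_mul_inv, ← Real.rpow_intCast (l ^ e ω i),
    ← Real.rpow_mul hl, mul_comm (e ω i)]

variable [Fintype Ω]

theorem monoVal_eq_ofReal {x : Ω → I → ℝ} (hl : 0 < l) (hx : ∀ ω i, 0 < x ω i)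
    (A : Ω × I → ℤ) (a : ℤ) :
    monoVal l x A a = ENNReal.ofReal (l ^ a * ∏ p : Ω × I, x p.1 p.2 ^ A p) := by
  rw [monoVal, ENNReal.ofReal_mul (zpow_pos hl a).le, ENNReal.ofReal_zpow_of_pos hl,
    ENNReal.ofReal_prod_zpow_of_pos fun p _ => hx p.1 p.2]

theorem monoVal_xcan (hc : ∀ ω i, 0 < c ω i) (hl : 0 < l) (A : Ω × I → ℤ) (a : ℤ) :
    monoVal l (xcan c e l) A a =
      ENNReal.ofReal (l ^ ((a : ℝ) + ∑ p : Ω × I, (A p : ℝ) * e p.1 p.2) *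
        ((∏ p : Ω × I, c p.1 p.2 ^ A p) *
          ∏ p : Ω × I, (∑ i', c p.1 i' * l ^ e p.1 i') ^ (-A p))) := by
  rw [monoVal_eq_ofReal hl (xcan_pos hc hl), Real.rpow_add hl, Real.rpow_intCast,
    Real.rpow_sum_of_pos hl]
  simp only [xcan_zpow hl.le, prod_mul_distrib]
  congr 1
  ring

theorem tendsto_prod_xcan_normaliser_zpow (he : ∀ ω i, 0 ≤ e ω i)
    (hsum : ∀ ω, ∑ i ∈ univ.filter (fun i => e ω i = 0), c ω i = 1) (A : Ω × I → ℤ) :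
    Tendsto (fun l : ℝ => ∏ p : Ω × I, (∑ i', c p.1 i' * l ^ e p.1 i') ^ (-A p))
      (𝓝 0) (𝓝 1) := by
  have hD : ∀ ω, Tendsto (fun l : ℝ => ∑ i', c ω i' * l ^ e ω i') (𝓝 0) (𝓝 1) := fun ω =>
    hsum ω ▸ tendsto_sum_mul_rpow_nhds_zero (c ω) (he ω)
  convert tendsto_finsetProd univ fun (p : Ω × I) _ => (hD p.1).zpow₀ (-A p) (Or.inl one_ne_zero)
  simp

theorem exists_tendsto_monoVal_xcan (hc : ∀ ω i, 0 < c ω i) (he : ∀ ω i, 0 ≤ e ω i)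
    (hsum : ∀ ω, ∑ i ∈ univ.filter (fun i => e ω i = 0), c ω i = 1) (A : Ω × I → ℤ) (a : ℤ) :
    ∃ L : ℝ≥0∞,
      Tendsto (fun lam => monoVal lam (xcan c e lam) A a) (𝓝[>] (0:ℝ)) (𝓝 L) ∧
        (L = 0 ↔ 0 < (a:ℝ) + ∑ p : Ω × I, (A p : ℝ) * e p.1 p.2) ∧
        (L = ⊤ ↔ (a:ℝ) + ∑ p : Ω × I, (A p : ℝ) * e p.1 p.2 < 0) ∧
        ((L = ∏ p : Ω × I, (ENNReal.ofReal (c p.1 p.2)) ^ (A p) ∧ L ≠ 0 ∧ L ≠ ⊤) ↔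
          (a:ℝ) + ∑ p : Ω × I, (A p : ℝ) * e p.1 p.2 = 0) := by
  have hC : 0 < ∏ p : Ω × I, c p.1 p.2 ^ A p := prod_pos fun p _ => zpow_pos (hc _ _) _
  have hlim : Tendsto (fun l : ℝ => (∏ p : Ω × I, c p.1 p.2 ^ A p) *
      ∏ p : Ω × I, (∑ i', c p.1 i' * l ^ e p.1 i') ^ (-A p)) (𝓝[>] 0)
      (𝓝 (∏ p : Ω × I, c p.1 p.2 ^ A p)) := by
    simpa using (tendsto_const_nhds.mul (tendsto_prod_xcan_normaliser_zpow he hsum A)).mono_left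
      nhdsWithin_le_nhds
  obtain ⟨L, hL, hL0, hLtop, hLfin⟩ := exists_tendsto_ofReal_rpow_mul_nhdsGT_zero hC hlim
    ((a : ℝ) + ∑ p : Ω × I, (A p : ℝ) * e p.1 p.2)
  rw [ENNReal.ofReal_prod_zpow_of_pos fun p _ => hc p.1 p.2] at hLfin
  refine ⟨L, hL.congr' ?_, hL0, hLtop, hLfin⟩
  filter_upwards [self_mem_nhdsWithin] with l hl
  exact (monoVal_xcan hc hl A a).symm

end xcan

/-- For a canonical family of strategies `(x_λ)` induced by `(c,e)`, for every
`A ∈ {-1,0,1}^{Ω×I}` and `a ∈ ℤ` the limit `L(A,a) = lim_{λ→0⁺} λ^a ∏ x_λ^i(ω)^{A(ω,i)}`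
exists in `[0,+∞]`, is `0` (resp. `+∞`, resp. `∏ c^A ∈ (0,∞)`) iff
`a + Σ A(ω,i) e(ω,i)` is `> 0` (resp. `< 0`, resp. `= 0`); consequently, for any sequence
`λ_n → 0` in `(0,1]`, the sequence `(λ_n, x_{λ_n})` is regular. -/
theorem xcan_limits_and_regular {Ω I : Type*} [Fintype Ω] [Fintype I]
    (c e : Ω → I → ℝ)
    (hc : ∀ ω i, 0 < c ω i) (he : ∀ ω i, 0 ≤ e ω i)
    (hsum : ∀ ω, ∑ i ∈ univ.filter (fun i => e ω i = 0), c ω i = 1) :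
    (∀ A : Ω × I → ℤ, (∀ p, A p = -1 ∨ A p = 0 ∨ A p = 1) → ∀ a : ℤ,
      ∃ L : ℝ≥0∞,
        Tendsto (fun lam => monoVal lam (xcan c e lam) A a) (𝓝[>] (0:ℝ)) (𝓝 L) ∧
        (L = 0 ↔ 0 < (a:ℝ) + ∑ p : Ω × I, (A p : ℝ) * e p.1 p.2) ∧
        (L = ⊤ ↔ (a:ℝ) + ∑ p : Ω × I, (A p : ℝ) * e p.1 p.2 < 0) ∧
        ((L = ∏ p : Ω × I, (ENNReal.ofReal (c p.1 p.2)) ^ (A p) ∧ L ≠ 0 ∧ L ≠ ⊤) ↔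
          (a:ℝ) + ∑ p : Ω × I, (A p : ℝ) * e p.1 p.2 = 0)) ∧
    (∀ lam : ℕ → ℝ, (∀ n, lam n ∈ Set.Ioc (0:ℝ) 1) → Tendsto lam atTop (𝓝 0) →
      IsRegularSeq lam (fun n => xcan c e (lam n))) := by
  refine ⟨fun A _ a => exists_tendsto_monoVal_xcan hc he hsum A a,
    fun lam hlam hlim => ⟨hlim, fun A a _ => ?_⟩⟩
  obtain ⟨L, hL, -⟩ := exists_tendsto_monoVal_xcan hc he hsum A a
  exact ⟨L, hL.comp (tendsto_nhdsWithin_iff.mpr ⟨hlim, .of_forall fun n => (hlam n).1⟩)⟩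
end

section
/- Let L be the limit vector of a regular sequence and 𝓛₊ = {(A,a) ∈ M : L(A,a) ∈ (0,∞)}. Then the linear system Σ_{(ω,i)} A(ω,i) d(ω,i) = ln L(A,a), for all (A,a) ∈ 𝓛₊, has a solution d ∈ ℝ^{Ω×I}. Equivalently, there exists c : Ω×I → (0,∞) with ∏_{(ω,i)} c(ω,i)^{A(ω,i)} = L(A,a) for all (A,a) ∈ 𝓛₊. -/
open Filter Topology Finset
open scoped ENNReal

/-
Take logarithms: for `(A,a) ∈ 𝓛₊` the logarithm of the monomial at stage `n` is
`a·log λₙ + Σ A(ω,i)·log xₙⁱ(ω)`, so the vector of these logarithms is `Ψ(wₙ) + tₙ·α`, where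
`Ψ d = (Σ A(ω,i) d(ω,i))_{(A,a)}` has finite-dimensional (hence closed) range `V`, `α = (a)_{(A,a)}`
and `tₙ = log λₙ → -∞`. Dividing by `tₙ` shows `α ∈ V`, so the whole sequence lies in `V` and its
limit `(ln L(A,a))_{(A,a)}` does too: this is the solvability of the system. Exponentiating a
solution `d` gives `c = exp d`.
-/

namespace ENNReal

theorem toReal_zpow (x : ℝ≥0∞) (n : ℤ) : (x ^ n).toReal = x.toReal ^ n := by
  cases n with
  | ofNat k => simp
  | negSucc k => simp [zpow_negSucc]

theorem ofReal_zpow {x : ℝ} (hx : 0 < x) (n : ℤ) :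
    ENNReal.ofReal x ^ n = ENNReal.ofReal (x ^ n) := by
  cases n with
  | ofNat k => simp [ENNReal.ofReal_pow hx.le]
  | negSucc k =>
    simp [zpow_negSucc, ← ENNReal.ofReal_pow hx.le, ENNReal.ofReal_inv_of_pos (pow_pos hx _)]

theorem prod_ofReal_exp_zpow {ι : Type*} [Fintype ι] (d : ι → ℝ) (A : ι → ℤ) :
    ∏ p, ENNReal.ofReal (Real.exp (d p)) ^ A p =
      ENNReal.ofReal (Real.exp (∑ p, (A p : ℝ) * d p)) := by
  rw [Real.exp_sum, ENNReal.ofReal_prod_of_nonneg fun _ _ => (Real.exp_pos _).le]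
  refine Finset.prod_congr rfl fun p _ => ?_
  rw [ENNReal.ofReal_zpow (Real.exp_pos _), mul_comm, Real.exp_mul, Real.rpow_intCast]

end ENNReal

/-- Dividing by `t n` shows that `α` is a limit of points of `V`. -/
theorem Submodule.mem_of_tendsto_add_smul {E ι : Type*} [AddCommGroup E] [Module ℝ E]
    [TopologicalSpace E] [IsTopologicalAddGroup E] [ContinuousSMul ℝ E]
    {l : Filter ι} [l.NeBot] {V : Submodule ℝ E} (hV : IsClosed (V : Set E))
    {u : ι → E} (hu : ∀ n, u n ∈ V) {t : ι → ℝ} (ht : Tendsto t l atBot) {α ℓ : E}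
    (h : Tendsto (fun n => u n + t n • α) l (𝓝 ℓ)) : ℓ ∈ V := by
  have hinv : Tendsto (fun n => (t n)⁻¹ • (u n + t n • α)) l (𝓝 0) := by
    simpa using (tendsto_inv_atBot_zero.comp ht).smul h
  have hα : α ∈ V := by
    have hlim : Tendsto (fun n => -((t n)⁻¹ • u n)) l (𝓝 α) := by
      have hsub : Tendsto (fun n => α - (t n)⁻¹ • (u n + t n • α)) l (𝓝 α) := by
        simpa using (tendsto_const_nhds (x := α)).sub hinv
      refine hsub.congr' ?_
      filter_upwards [ht.eventually_ne_atBot 0] with n hn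
      rw [smul_add, smul_smul, inv_mul_cancel₀ hn, one_smul]
      abel
    exact hV.mem_of_tendsto hlim
      (Eventually.of_forall fun n => V.neg_mem (V.smul_mem _ (hu n)))
  exact hV.mem_of_tendsto h
    (Eventually.of_forall fun n => V.add_mem (hu n) (V.smul_mem _ hα))

open Matrix in
theorem Matrix.exists_mulVec_eq_of_tendsto {S k : Type*} [Fintype k] (M : Matrix S k ℝ)
    {α ℓ : S → ℝ} {w : ℕ → k → ℝ} {t : ℕ → ℝ} (ht : Tendsto t atTop atBot)
    (h : ∀ s, Tendsto (fun n => (M *ᵥ w n) s + t n * α s) atTop (𝓝 (ℓ s))) :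
    ∃ d, M *ᵥ d = ℓ :=
  (LinearMap.range M.mulVecLin).mem_of_tendsto_add_smul
    (Submodule.closed_of_finiteDimensional _) (fun n => ⟨w n, rfl⟩) ht (tendsto_pi_nhds.2 h)

section Monomial

variable {Ω I : Type*} [Fintype Ω] [Fintype I]

theorem toReal_monoVal {lam : ℝ} {x : Ω → I → ℝ} (hlam : 0 ≤ lam)
    (hx : ∀ p : Ω × I, 0 ≤ x p.1 p.2) (A : Ω × I → ℤ) (a : ℤ) :
    (monoVal lam x A a).toReal = lam ^ a * ∏ p : Ω × I, x p.1 p.2 ^ A p := by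
  simp only [monoVal, ENNReal.toReal_mul, ENNReal.toReal_prod, ENNReal.toReal_zpow,
    ENNReal.toReal_ofReal hlam, ENNReal.toReal_ofReal (hx _)]

theorem log_toReal_monoVal {lam : ℝ} {x : Ω → I → ℝ} (hlam : 0 ≤ lam)
    (hx : ∀ p : Ω × I, 0 ≤ x p.1 p.2) {A : Ω × I → ℤ} {a : ℤ}
    (h : (monoVal lam x A a).toReal ≠ 0) :
    Real.log (monoVal lam x A a).toReal =
      a * Real.log lam + ∑ p : Ω × I, (A p : ℝ) * Real.log (x p.1 p.2) := by
  rw [toReal_monoVal hlam hx] at h ⊢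
  have hprod := right_ne_zero_of_mul h
  rw [Real.log_mul (left_ne_zero_of_mul h) hprod, Real.log_zpow,
    Real.log_prod fun p _ => Finset.prod_ne_zero_iff.1 hprod p (Finset.mem_univ p)]
  simp only [Real.log_zpow]

theorem tendsto_log_monoVal {lam : ℕ → ℝ} {x : ℕ → Ω → I → ℝ} (hlam : ∀ n, 0 ≤ lam n)
    (hx : ∀ n (p : Ω × I), 0 ≤ x n p.1 p.2) {A : Ω × I → ℤ} {a : ℤ} {l : ℝ≥0∞}
    (hl : Tendsto (fun n => monoVal (lam n) (x n) A a) atTop (𝓝 l)) (h0 : l ≠ 0) (htop : l ≠ ⊤) :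
    Tendsto (fun n => a * Real.log (lam n) + ∑ p : Ω × I, (A p : ℝ) * Real.log (x n p.1 p.2))
      atTop (𝓝 (Real.log l.toReal)) := by
  have hreal := (ENNReal.tendsto_toReal htop).comp hl
  have hne : l.toReal ≠ 0 := (ENNReal.toReal_pos h0 htop).ne'
  refine (hreal.log hne).congr' ?_
  filter_upwards [hreal.eventually_ne hne] with n hn
  exact log_toReal_monoVal (hlam n) (hx n) hn

end Monomial

theorem coefficient_system_solvable_general {Ω I : Type*} [Fintype Ω] [Fintype I]
    (lam : ℕ → ℝ) (x : ℕ → Ω → I → ℝ)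
    (hlam : ∀ n, lam n ∈ Set.Ioc (0:ℝ) 1)
    (hx : ∀ n ω, x n ω ∈ stdSimplex ℝ I)
    (hreg : IsRegularSeq lam x)
    (L : (Ω × I → ℤ) → ℤ → ℝ≥0∞)
    (hL : ∀ A a, memM Ω I A a →
      Tendsto (fun n => monoVal (lam n) (x n) A a) atTop (𝓝 (L A a))) :
    (∃ d : Ω × I → ℝ,
      ∀ A a, memM Ω I A a → L A a ≠ 0 → L A a ≠ ⊤ →
        ∑ p : Ω × I, (A p : ℝ) * d p = Real.log (L A a).toReal) ∧
    (∃ c : Ω × I → ℝ, (∀ p, 0 < c p) ∧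
      ∀ A a, memM Ω I A a → L A a ≠ 0 → L A a ≠ ⊤ →
        ∏ p : Ω × I, (ENNReal.ofReal (c p)) ^ (A p) = L A a) := by
  let S := {q : (Ω × I → ℤ) × ℤ // memM Ω I q.1 q.2 ∧ L q.1 q.2 ≠ 0 ∧ L q.1 q.2 ≠ ⊤}
  have hlog : Tendsto (fun n => Real.log (lam n)) atTop atBot :=
    Real.tendsto_log_nhdsGT_zero.comp <|
      tendsto_nhdsWithin_iff.2 ⟨hreg.1, Eventually.of_forall fun n => (hlam n).1⟩
  obtain ⟨d, hd⟩ := Matrix.exists_mulVec_eq_of_tendsto (S := S) (fun s p => (s.1.1 p : ℝ))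
    (α := fun s => (s.1.2 : ℝ)) (ℓ := fun s => Real.log (L s.1.1 s.1.2).toReal)
    (w := fun n p => Real.log (x n p.1 p.2)) hlog fun ⟨(A, a), hm, h0, htop⟩ => by
      refine (tendsto_log_monoVal (fun n => (hlam n).1.le) (fun n p => (hx n p.1).1 p.2)
        (hL A a hm) h0 htop).congr fun n => ?_
      simp only [Matrix.mulVec, dotProduct]
      ring
  have hsol : ∀ A a, memM Ω I A a → L A a ≠ 0 → L A a ≠ ⊤ →
      ∑ p : Ω × I, (A p : ℝ) * d p = Real.log (L A a).toReal :=
    fun A a hm h0 htop => congrFun hd ⟨(A, a), hm, h0, htop⟩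
  refine ⟨⟨d, hsol⟩, fun p => Real.exp (d p), fun p => Real.exp_pos _, fun A a hm h0 htop => ?_⟩
  rw [ENNReal.prod_ofReal_exp_zpow, hsol A a hm h0 htop,
    Real.exp_log (ENNReal.toReal_pos h0 htop), ENNReal.ofReal_toReal htop]

/-- Solving for the coefficients: for the limit vector `L` of a regular sequence, the system
`Σ A(ω,i) d(ω,i) = ln L(A,a)` over `𝓛₊ = {0 < L < ∞}` has a solution; equivalently, there is
`c : Ω×I → (0,∞)` with `∏ c(ω,i)^{A(ω,i)} = L(A,a)` for all `(A,a) ∈ 𝓛₊`. -/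
theorem coefficient_system_solvable {Ω I : Type*} [Fintype Ω] [Fintype I] [Nonempty I]
    (lam : ℕ → ℝ) (x : ℕ → Ω → I → ℝ)
    (hlam : ∀ n, lam n ∈ Set.Ioc (0:ℝ) 1)
    (hx : ∀ n ω, x n ω ∈ stdSimplex ℝ I)
    (hreg : IsRegularSeq lam x)
    (L : (Ω × I → ℤ) → ℤ → ℝ≥0∞)
    (hL : ∀ A a, memM Ω I A a →
      Tendsto (fun n => monoVal (lam n) (x n) A a) atTop (𝓝 (L A a))) :
    (∃ d : Ω × I → ℝ,
      ∀ A a, memM Ω I A a → L A a ≠ 0 → L A a ≠ ⊤ →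
        ∑ p : Ω × I, (A p : ℝ) * d p = Real.log (L A a).toReal) ∧
    (∃ c : Ω × I → ℝ, (∀ p, 0 < c p) ∧
      ∀ A a, memM Ω I A a → L A a ≠ 0 → L A a ≠ ⊤ →
        ∏ p : Ω × I, (ENNReal.ofReal (c p)) ^ (A p) = L A a) :=
  coefficient_system_solvable_general lam x hlam hx hreg L hL
end

section
/- Let P_n and P'_n be finite positive combinations of monomials of the form m_n = C (1−λ_n)^b λ_n^a ∏_{(ω,i)} x_n^i(ω)^{A(ω,i)} with C > 0, a,b ∈ {0,…,|Ω|}, A ∈ {0,1}^{Ω×I}, where (λ_n, x_n) is a regular sequence such that for any two such monomials m_n, m'_n the ratio m_n/m'_n converges in [0,+∞]. If P'_n > 0 for all n and some monomial of P'_n is maximal among all monomials appearing in P_n and P'_n (with respect to the order m ⪯ m' iff lim m_n/m'_n < ∞), then lim_n P_n/P'_n exists in [0,+∞) and depends only on the coefficients C and the limit vector L of the regular sequence. -/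
open Filter Topology Finset
open scoped ENNReal

/-- The real-valued monomial `C (1-λ)^b λ^a ∏_{(ω,i)} x^i(ω)^{A(ω,i)}`. -/
noncomputable def rmono {Ω I : Type*} [Fintype Ω] [Fintype I]
    (lam : ℝ) (x : Ω → I → ℝ) (C : ℝ) (b a : ℕ) (A : Ω × I → ℕ) : ℝ :=
  C * (1 - lam) ^ b * lam ^ a * ∏ p : Ω × I, (x p.1 p.2) ^ (A p)

/-!
Divide every monomial of `P_n` and `P'_n` by the maximal monomial
`w_n = λ_n^{a'_{k₀}} ∏ x_n^{A'_{k₀}}` of the denominator. What remains of a monomial is its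
coefficient `C (1 - λ_n)^b → C` times a monomial with exponents in `M`, whose limit is an entry
of `L`, finite by maximality. Hence in `[0, +∞]` the ratio `P_n / P'_n` tends to
`(∑ C_k L_k) / (∑ C'_k L'_k)`, which is finite, with denominator at least `C'_{k₀} > 0` because
`L'_{k₀} = L(0, 0) = 1`. In `ℝ≥0∞` a coordinate `x = 0` with exponent `-1` gives `⊤`, but the
factorization `m_n = (m_n / w_n) w_n` still holds as long as `m_n / w_n` is finite.
-/

namespace ENNReal

theorem zpow_sub_mul_zpow_of_ne_zero_or_le {X : ℝ≥0∞} (hX : X ≠ ⊤) {u v : ℕ}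
    (h : X ≠ 0 ∨ v ≤ u) : X ^ ((u : ℤ) - v) * X ^ (v : ℤ) = X ^ (u : ℤ) := by
  rcases h with hX0 | hvu
  · rw [← ENNReal.zpow_add hX0 hX, sub_add_cancel]
  · rw [← Nat.cast_sub hvu]
    simp only [zpow_natCast, ← pow_add, Nat.sub_add_cancel hvu]

theorem prod_zpow_sub_mul_prod_zpow {ι : Type*} [Fintype ι] {X : ι → ℝ≥0∞}
    (hX : ∀ i, X i ≠ ⊤) (u v : ι → ℕ) (h : ∏ i, X i ^ ((u i : ℤ) - v i) ≠ ⊤) :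
    (∏ i, X i ^ ((u i : ℤ) - v i)) * ∏ i, X i ^ (v i : ℤ) = ∏ i, X i ^ (u i : ℤ) := by
  classical
  by_cases hbad : ∃ j, X j = 0 ∧ u j < v j
  · -- the factor at `j` is `0⁻¹ = ⊤`, so finiteness of the product forces a factor `0`
    obtain ⟨j, hXj, huv⟩ := hbad
    have htop : X j ^ ((u j : ℤ) - v j) = ⊤ := by
      rw [hXj, zero_zpow_def, if_neg (by omega), if_neg (by omega)]
    have hzero : ∏ i, X i ^ ((u i : ℤ) - v i) = 0 := by
      rw [← Finset.mul_prod_erase _ _ (Finset.mem_univ j), htop] at h ⊢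
      rw [ENNReal.top_mul'] at h
      simpa using h
    obtain ⟨q, -, hq⟩ := Finset.prod_eq_zero_iff.mp hzero
    have hXq : X q = 0 := by_contra fun hXq => (zpow_pos hXq (hX q) _).ne' hq
    have hvu : v q < u q := by
      rw [hXq, zero_zpow_def] at hq
      split_ifs at hq <;> simp_all
    rw [hzero, zero_mul, eq_comm]
    exact Finset.prod_eq_zero (Finset.mem_univ q) (by rw [hXq, zpow_natCast, zero_pow (by omega)])
  · push Not at hbad
    rw [← Finset.prod_mul_distrib]
    exact Finset.prod_congr rfl fun i _ => zpow_sub_mul_zpow_of_ne_zero_or_le (hX i)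
      ((em (X i = 0)).elim (fun h0 => Or.inr (hbad i h0)) Or.inl)

end ENNReal

theorem tendsto_sum_ofReal_mul_of_tendsto_zero {κ : Type*} [Fintype κ] {lam : ℕ → ℝ}
    (hlam : Tendsto lam atTop (𝓝 0)) (C : κ → ℝ) (b : κ → ℕ) {D : κ → ℕ → ℝ≥0∞}
    {ℓ : κ → ℝ≥0∞} (hD : ∀ k, Tendsto (D k) atTop (𝓝 (ℓ k))) (hℓ : ∀ k, ℓ k ≠ ⊤) :
    Tendsto (fun n => ∑ k, ENNReal.ofReal (C k * (1 - lam n) ^ b k) * D k n) atTop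
      (𝓝 (∑ k, ENNReal.ofReal (C k) * ℓ k)) := by
  refine tendsto_finsetSum _ fun k _ => ENNReal.Tendsto.mul ?_ (Or.inr (hℓ k)) (hD k)
    (Or.inr ENNReal.ofReal_ne_top)
  have hcoef : Tendsto (fun n => C k * (1 - lam n) ^ b k) atTop (𝓝 (C k * (1 - 0) ^ b k)) :=
    tendsto_const_nhds.mul ((tendsto_const_nhds.sub hlam).pow _)
  simpa using ENNReal.tendsto_ofReal hcoef

theorem div_eq_toReal_div_of_ofReal_eq_mul {p q : ℝ} (hp : 0 ≤ p) (hq : 0 < q)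
    {N D W : ℝ≥0∞} (hW : W ≠ ⊤) (hN : ENNReal.ofReal p = N * W)
    (hD : ENNReal.ofReal q = D * W) : p / q = (N / D).toReal := by
  have hW0 : W ≠ 0 := fun h => (ENNReal.ofReal_pos.2 hq).ne' (by rw [hD, h, mul_zero])
  rw [← ENNReal.mul_div_mul_right N D hW0 hW, ← hN, ← hD, ← ENNReal.ofReal_div_of_pos hq,
    ENNReal.toReal_ofReal (div_nonneg hp hq.le)]

section Monomials

variable {Ω I : Type*} [Fintype Ω] [Fintype I]

theorem memM_sub {A B : Ω × I → ℕ} {a b : ℕ} (hA : ∀ p, A p ≤ 1) (hB : ∀ p, B p ≤ 1)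
    (ha : a ≤ Fintype.card Ω) (hb : b ≤ Fintype.card Ω) :
    memM Ω I (fun p => (A p : ℤ) - B p) ((a : ℤ) - b) :=
  ⟨fun p => by dsimp only; have := hA p; have := hB p; omega, by omega⟩

theorem monoVal_natCast_ne_top (lam : ℝ) (x : Ω → I → ℝ) (A : Ω × I → ℕ) (a : ℕ) :
    monoVal lam x (fun p => (A p : ℤ)) a ≠ ⊤ := by
  simp only [monoVal, zpow_natCast]
  exact ENNReal.mul_ne_top (by simp) (ENNReal.prod_ne_top fun p _ => by simp)

theorem monoVal_sub_mul_monoVal {lam : ℝ} (hlam : 0 < lam) (x : Ω → I → ℝ)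
    (A B : Ω × I → ℕ) (a b : ℕ)
    (h : monoVal lam x (fun p => (A p : ℤ) - B p) ((a : ℤ) - b) ≠ ⊤) :
    monoVal lam x (fun p => (A p : ℤ) - B p) ((a : ℤ) - b) * monoVal lam x (fun p => (B p : ℤ)) b
      = monoVal lam x (fun p => (A p : ℤ)) a := by
  have hΛ : ENNReal.ofReal lam ≠ 0 := (ENNReal.ofReal_pos.mpr hlam).ne'
  have hprod : ∏ p : Ω × I, ENNReal.ofReal (x p.1 p.2) ^ ((A p : ℤ) - B p) ≠ ⊤ := fun htop =>
    h (ENNReal.mul_eq_top.mpr (Or.inl ⟨(ENNReal.zpow_pos hΛ ENNReal.ofReal_ne_top _).ne', htop⟩))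
  simp only [monoVal]
  rw [mul_mul_mul_comm, ← ENNReal.zpow_add hΛ ENNReal.ofReal_ne_top, sub_add_cancel,
    ENNReal.prod_zpow_sub_mul_prod_zpow (fun _ => ENNReal.ofReal_ne_top) A B hprod]

theorem ofReal_rmono {lam : ℝ} (hlam0 : 0 ≤ lam) (hlam1 : lam ≤ 1) {x : Ω → I → ℝ}
    (hx : ∀ ω i, 0 ≤ x ω i) {C : ℝ} (hC : 0 ≤ C) (b a : ℕ) (A : Ω × I → ℕ) :
    ENNReal.ofReal (rmono lam x C b a A)
      = ENNReal.ofReal (C * (1 - lam) ^ b) * monoVal lam x (fun p => (A p : ℤ)) a := by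
  have hCb : 0 ≤ C * (1 - lam) ^ b := mul_nonneg hC (pow_nonneg (sub_nonneg.2 hlam1) _)
  rw [rmono, mul_assoc, ENNReal.ofReal_mul hCb, monoVal,
    ENNReal.ofReal_mul (pow_nonneg hlam0 _), ENNReal.ofReal_pow hlam0, zpow_natCast,
    ENNReal.ofReal_prod_of_nonneg fun p _ => pow_nonneg (hx p.1 p.2) _]
  simp only [ENNReal.ofReal_pow (hx _ _), zpow_natCast]

theorem rmono_nonneg {lam : ℝ} (hlam0 : 0 ≤ lam) (hlam1 : lam ≤ 1) {x : Ω → I → ℝ}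
    (hx : ∀ ω i, 0 ≤ x ω i) {C : ℝ} (hC : 0 ≤ C) (b a : ℕ) (A : Ω × I → ℕ) :
    0 ≤ rmono lam x C b a A :=
  mul_nonneg (mul_nonneg (mul_nonneg hC (pow_nonneg (sub_nonneg.2 hlam1) _))
    (pow_nonneg hlam0 _)) (Finset.prod_nonneg fun p _ => pow_nonneg (hx p.1 p.2) _)

theorem ofReal_sum_rmono_eq {κ : Type*} [Fintype κ] {lam : ℝ} (hlam0 : 0 < lam)
    (hlam1 : lam ≤ 1) {x : Ω → I → ℝ} (hx : ∀ ω i, 0 ≤ x ω i) {C : κ → ℝ}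
    (hC : ∀ k, 0 ≤ C k) (b a : κ → ℕ) (A : κ → Ω × I → ℕ) (B : Ω × I → ℕ) (c : ℕ)
    (hfin : ∀ k, monoVal lam x (fun p => (A k p : ℤ) - B p) ((a k : ℤ) - c) ≠ ⊤) :
    ENNReal.ofReal (∑ k, rmono lam x (C k) (b k) (a k) (A k))
      = (∑ k, ENNReal.ofReal (C k * (1 - lam) ^ b k) *
          monoVal lam x (fun p => (A k p : ℤ) - B p) ((a k : ℤ) - c)) *
        monoVal lam x (fun p => (B p : ℤ)) c := by
  rw [ENNReal.ofReal_sum_of_nonneg fun k _ => rmono_nonneg hlam0.le hlam1 hx (hC k) _ _ _,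
    Finset.sum_mul]
  refine Finset.sum_congr rfl fun k _ => ?_
  rw [ofReal_rmono hlam0.le hlam1 hx (hC k), mul_assoc,
    monoVal_sub_mul_monoVal hlam0 x _ _ _ _ (hfin k)]

theorem tendsto_sum_rmono_div_sum_rmono {κ κ' : Type*} [Fintype κ] [Fintype κ']
    {lam : ℕ → ℝ} {x : ℕ → Ω → I → ℝ}
    (hlam : ∀ n, lam n ∈ Set.Ioc (0:ℝ) 1) (hlam0 : Tendsto lam atTop (𝓝 0))
    (hx : ∀ n ω i, 0 ≤ x n ω i) {L : (Ω × I → ℤ) → ℤ → ℝ≥0∞}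
    (hL : ∀ A a, memM Ω I A a →
      Tendsto (fun n => monoVal (lam n) (x n) A a) atTop (𝓝 (L A a)))
    {C : κ → ℝ} (b : κ → ℕ) {a : κ → ℕ} {A : κ → Ω × I → ℕ}
    {C' : κ' → ℝ} (b' : κ' → ℕ) {a' : κ' → ℕ} {A' : κ' → Ω × I → ℕ}
    (hC : ∀ k, 0 ≤ C k) (ha : ∀ k, a k ≤ Fintype.card Ω) (hA : ∀ k p, A k p ≤ 1)
    (hC' : ∀ k, 0 ≤ C' k) (ha' : ∀ k, a' k ≤ Fintype.card Ω) (hA' : ∀ k p, A' k p ≤ 1)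
    (hpos : ∀ n, 0 < ∑ k, rmono (lam n) (x n) (C' k) (b' k) (a' k) (A' k))
    {k₀ : κ'} (hC'₀ : 0 < C' k₀)
    (hmax : ∀ k, L (fun p => (A k p : ℤ) - A' k₀ p) ((a k : ℤ) - a' k₀) ≠ ⊤)
    (hmax' : ∀ k, L (fun p => (A' k p : ℤ) - A' k₀ p) ((a' k : ℤ) - a' k₀) ≠ ⊤) :
    Tendsto (fun n => (∑ k, rmono (lam n) (x n) (C k) (b k) (a k) (A k)) /
        (∑ k, rmono (lam n) (x n) (C' k) (b' k) (a' k) (A' k))) atTop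
      (𝓝 (((∑ k, ENNReal.ofReal (C k) *
          L (fun p => (A k p : ℤ) - A' k₀ p) ((a k : ℤ) - a' k₀)) /
        (∑ k, ENNReal.ofReal (C' k) *
          L (fun p => (A' k p : ℤ) - A' k₀ p) ((a' k : ℤ) - a' k₀))).toReal)) := by
  have hD k := hL _ _ (memM_sub (hA k) (hA' k₀) (ha k) (ha' k₀))
  have hD' k := hL _ _ (memM_sub (hA' k) (hA' k₀) (ha' k) (ha' k₀))
  have hD'₀ : L (fun p => (A' k₀ p : ℤ) - A' k₀ p) ((a' k₀ : ℤ) - a' k₀) = 1 :=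
    tendsto_nhds_unique (hD' k₀) (by simp [monoVal])
  set S := ∑ k, ENNReal.ofReal (C k) * L (fun p => (A k p : ℤ) - A' k₀ p) ((a k : ℤ) - a' k₀)
  set S' := ∑ k, ENNReal.ofReal (C' k) * L (fun p => (A' k p : ℤ) - A' k₀ p) ((a' k : ℤ) - a' k₀)
  have hS_ne_top : S ≠ ⊤ :=
    ENNReal.sum_ne_top.2 fun k _ => ENNReal.mul_ne_top ENNReal.ofReal_ne_top (hmax k)
  have hS'_ne_top : S' ≠ ⊤ :=
    ENNReal.sum_ne_top.2 fun k _ => ENNReal.mul_ne_top ENNReal.ofReal_ne_top (hmax' k)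
  have hS'_ne_zero : S' ≠ 0 := by
    refine (lt_of_lt_of_le ?_ (Finset.single_le_sum (fun k _ => zero_le)
      (Finset.mem_univ k₀))).ne'
    simpa only [hD'₀, mul_one, ENNReal.ofReal_pos] using hC'₀
  refine ((ENNReal.tendsto_toReal (ENNReal.div_ne_top hS_ne_top hS'_ne_zero)).comp
    (ENNReal.Tendsto.div (tendsto_sum_ofReal_mul_of_tendsto_zero hlam0 C b hD hmax)
      (Or.inr hS'_ne_zero) (tendsto_sum_ofReal_mul_of_tendsto_zero hlam0 C' b' hD' hmax')
      (Or.inl hS'_ne_top))).congr' ?_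
  filter_upwards [eventually_all.2 fun k => (hD k).eventually_ne (hmax k),
    eventually_all.2 fun k => (hD' k).eventually_ne (hmax' k)] with n hn hn'
  obtain ⟨hlam0n, hlam1n⟩ := hlam n
  exact (div_eq_toReal_div_of_ofReal_eq_mul
    (Finset.sum_nonneg fun k _ => rmono_nonneg hlam0n.le hlam1n (hx n) (hC k) _ _ _) (hpos n)
    (monoVal_natCast_ne_top _ _ _ _) (ofReal_sum_rmono_eq hlam0n hlam1n (hx n) hC b a A _ _ hn)
    (ofReal_sum_rmono_eq hlam0n hlam1n (hx n) hC' b' a' A' _ _ hn')).symm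

end Monomials

theorem ratio_of_monomial_sums_converges_general
    {Ω I : Type*} [Fintype Ω] [Fintype I]
    {κ κ' : Type*} [Fintype κ] [Fintype κ']
    -- the two regular sequences, with the same limit vector L
    (lam lam' : ℕ → ℝ) (x x' : ℕ → Ω → I → ℝ)
    (hlam : ∀ n, lam n ∈ Set.Ioc (0:ℝ) 1) (hlam' : ∀ n, lam' n ∈ Set.Ioc (0:ℝ) 1)
    (hx : ∀ n ω, x n ω ∈ stdSimplex ℝ I) (hx' : ∀ n ω, x' n ω ∈ stdSimplex ℝ I)
    (hreg : IsRegularSeq lam x) (hreg' : IsRegularSeq lam' x')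
    (L : (Ω × I → ℤ) → ℤ → ℝ≥0∞)
    (hL : ∀ A a, memM Ω I A a →
      Tendsto (fun n => monoVal (lam n) (x n) A a) atTop (𝓝 (L A a)))
    (hL' : ∀ A a, memM Ω I A a →
      Tendsto (fun n => monoVal (lam' n) (x' n) A a) atTop (𝓝 (L A a)))
    -- data of the numerator P and denominator P'
    (C : κ → ℝ) (b a : κ → ℕ) (A : κ → Ω × I → ℕ)
    (C' : κ' → ℝ) (b' a' : κ' → ℕ) (A' : κ' → Ω × I → ℕ)
    (hC : ∀ k, 0 < C k) (ha : ∀ k, a k ≤ Fintype.card Ω)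
    (hA : ∀ k p, A k p ≤ 1)
    (hC' : ∀ k, 0 < C' k)
    (ha' : ∀ k, a' k ≤ Fintype.card Ω) (hA' : ∀ k p, A' k p ≤ 1)
    -- positivity of the denominator along both sequences
    (hpos : ∀ n, 0 < ∑ k, rmono (lam n) (x n) (C' k) (b' k) (a' k) (A' k))
    (hpos' : ∀ n, 0 < ∑ k, rmono (lam' n) (x' n) (C' k) (b' k) (a' k) (A' k))
    -- a maximal monomial of the denominator, w.r.t. the order induced by L
    (k₀ : κ')
    (hmax : ∀ k : κ,
      L (fun p => (A k p : ℤ) - (A' k₀ p : ℤ)) ((a k : ℤ) - (a' k₀ : ℤ)) ≠ ⊤)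
    (hmax' : ∀ k : κ',
      L (fun p => (A' k p : ℤ) - (A' k₀ p : ℤ)) ((a' k : ℤ) - (a' k₀ : ℤ)) ≠ ⊤) :
    ∃ r : ℝ, 0 ≤ r ∧
      Tendsto (fun n =>
        (∑ k, rmono (lam n) (x n) (C k) (b k) (a k) (A k)) /
        (∑ k, rmono (lam n) (x n) (C' k) (b' k) (a' k) (A' k))) atTop (𝓝 r) ∧
      Tendsto (fun n =>
        (∑ k, rmono (lam' n) (x' n) (C k) (b k) (a k) (A k)) /
        (∑ k, rmono (lam' n) (x' n) (C' k) (b' k) (a' k) (A' k))) atTop (𝓝 r) :=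
  ⟨_, ENNReal.toReal_nonneg,
    tendsto_sum_rmono_div_sum_rmono hlam hreg.1 (fun n ω => (hx n ω).1) hL b b'
      (fun k => (hC k).le) ha hA (fun k => (hC' k).le) ha' hA' hpos (hC' k₀) hmax hmax',
    tendsto_sum_rmono_div_sum_rmono hlam' hreg'.1 (fun n ω => (hx' n ω).1) hL' b b'
      (fun k => (hC k).le) ha hA (fun k => (hC' k).le) ha' hA' hpos' (hC' k₀) hmax hmax'⟩

/-- Ratios of positive combinations of monomials along a regular sequence: if some monomial
of the denominator is maximal (its ratio-limit with every other monomial is finite, a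
condition expressed through the limit vector `L`), then `P_n / P'_n` converges to a
nonnegative real limit which depends only on the coefficients `C` and on `L` (hence is the
same for any other regular sequence with the same limit vector `L`). -/
theorem ratio_of_monomial_sums_converges
    {Ω I : Type*} [Fintype Ω] [Fintype I] [Nonempty I]
    {κ κ' : Type*} [Fintype κ] [Fintype κ']
    -- the two regular sequences, with the same limit vector L
    (lam lam' : ℕ → ℝ) (x x' : ℕ → Ω → I → ℝ)
    (hlam : ∀ n, lam n ∈ Set.Ioc (0:ℝ) 1) (hlam' : ∀ n, lam' n ∈ Set.Ioc (0:ℝ) 1)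
    (hx : ∀ n ω, x n ω ∈ stdSimplex ℝ I) (hx' : ∀ n ω, x' n ω ∈ stdSimplex ℝ I)
    (hreg : IsRegularSeq lam x) (hreg' : IsRegularSeq lam' x')
    (L : (Ω × I → ℤ) → ℤ → ℝ≥0∞)
    (hL : ∀ A a, memM Ω I A a →
      Tendsto (fun n => monoVal (lam n) (x n) A a) atTop (𝓝 (L A a)))
    (hL' : ∀ A a, memM Ω I A a →
      Tendsto (fun n => monoVal (lam' n) (x' n) A a) atTop (𝓝 (L A a)))
    -- data of the numerator P and denominator P'
    (C : κ → ℝ) (b a : κ → ℕ) (A : κ → Ω × I → ℕ)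
    (C' : κ' → ℝ) (b' a' : κ' → ℕ) (A' : κ' → Ω × I → ℕ)
    (hC : ∀ k, 0 < C k) (hb : ∀ k, b k ≤ Fintype.card Ω) (ha : ∀ k, a k ≤ Fintype.card Ω)
    (hA : ∀ k p, A k p ≤ 1)
    (hC' : ∀ k, 0 < C' k) (hb' : ∀ k, b' k ≤ Fintype.card Ω)
    (ha' : ∀ k, a' k ≤ Fintype.card Ω) (hA' : ∀ k p, A' k p ≤ 1)
    -- positivity of the denominator along both sequences
    (hpos : ∀ n, 0 < ∑ k, rmono (lam n) (x n) (C' k) (b' k) (a' k) (A' k))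
    (hpos' : ∀ n, 0 < ∑ k, rmono (lam' n) (x' n) (C' k) (b' k) (a' k) (A' k))
    -- a maximal monomial of the denominator, w.r.t. the order induced by L
    (k₀ : κ')
    (hmax : ∀ k : κ,
      L (fun p => (A k p : ℤ) - (A' k₀ p : ℤ)) ((a k : ℤ) - (a' k₀ : ℤ)) ≠ ⊤)
    (hmax' : ∀ k : κ',
      L (fun p => (A' k p : ℤ) - (A' k₀ p : ℤ)) ((a' k : ℤ) - (a' k₀ : ℤ)) ≠ ⊤) :
    ∃ r : ℝ, 0 ≤ r ∧
      Tendsto (fun n =>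
        (∑ k, rmono (lam n) (x n) (C k) (b k) (a k) (A k)) /
        (∑ k, rmono (lam n) (x n) (C' k) (b' k) (a' k) (A' k))) atTop (𝓝 r) ∧
      Tendsto (fun n =>
        (∑ k, rmono (lam' n) (x' n) (C k) (b k) (a k) (A k)) /
        (∑ k, rmono (lam' n) (x' n) (C' k) (b' k) (a' k) (A' k))) atTop (𝓝 r) :=
  ratio_of_monomial_sums_converges_general lam lam' x x' hlam hlam' hx hx' hreg hreg' L hL hL' C b a
    A C' b' a' A' hC ha hA hC' ha' hA' hpos hpos' k₀ hmax hmax'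
end

section
/- Suppose for each ε > 0 there is λ₀ such that min_{j∈J^Ω} γ_λ(ω, x_λ, j) ≥ limsup_{μ→0} v_μ(ω) − ε for all λ ∈ (0,λ₀), where (x_λ) is some family of stationary strategies of player 1. Then liminf_{λ→0} v_λ(ω) ≥ limsup_{λ→0} v_λ(ω), hence lim_{λ→0} v_λ(ω) exists. -/
open Filter Topology Finset

/-- Bilinear extension of the payoff `g` to mixed actions. -/
noncomputable def mixedG {Ω I J : Type*} [Fintype I] [Fintype J]
    (g : Ω → I → J → ℝ) (ω : Ω) (s : I → ℝ) (t : J → ℝ) : ℝ :=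
  ∑ i, ∑ j, s i * t j * g ω i j

/-- Bilinear extension of the transition `q` to mixed actions. -/
noncomputable def mixedQ {Ω I J : Type*} [Fintype I] [Fintype J]
    (q : Ω → I → J → Ω → ℝ) (ω : Ω) (s : I → ℝ) (t : J → ℝ) (ω' : Ω) : ℝ :=
  ∑ i, ∑ j, s i * t j * q ω i j ω'

/-- Transition matrix on states induced by a pair of stationary strategies. -/
noncomputable def Qmat {Ω I J : Type*} [Fintype I] [Fintype J]
    (q : Ω → I → J → Ω → ℝ) (x : Ω → I → ℝ) (y : Ω → J → ℝ) : Matrix Ω Ω ℝ :=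
  fun ω ω' => mixedQ q ω (x ω) (y ω) ω'

/-- The mean `λ`-discounted time spent in state `ω'` starting from `ω`. -/
noncomputable def discTime {Ω : Type*} [Fintype Ω] [DecidableEq Ω]
    (lam : ℝ) (Q : Matrix Ω Ω ℝ) (ω ω' : Ω) : ℝ :=
  ∑' m : ℕ, lam * (1 - lam) ^ m * (Q ^ m) ω ω'

/-- The expected `λ`-discounted payoff `γ_λ(ω,x,y)` induced by a pair of stationary
strategies `(x,y)` from initial state `ω`. -/
noncomputable def gammaPay {Ω I J : Type*} [Fintype Ω] [DecidableEq Ω] [Fintype I] [Fintype J]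
    (g : Ω → I → J → ℝ) (q : Ω → I → J → Ω → ℝ)
    (lam : ℝ) (x : Ω → I → ℝ) (y : Ω → J → ℝ) (ω : Ω) : ℝ :=
  ∑ ω', discTime lam (Qmat q x y) ω ω' * mixedG g ω' (x ω') (y ω')

/-- The Shapley operator, the value of the one-shot game being `sup_s inf_t`. -/
noncomputable def shapleyOp {Ω I J : Type*} [Fintype Ω] [Fintype I] [Fintype J]
    (g : Ω → I → J → ℝ) (q : Ω → I → J → Ω → ℝ) (lam : ℝ) (f : Ω → ℝ) (ω : Ω) : ℝ :=
  ⨆ s : stdSimplex ℝ I, ⨅ t : stdSimplex ℝ J,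
    lam * mixedG g ω s.1 t.1 + (1 - lam) * ∑ ω', mixedQ q ω s.1 t.1 ω' * f ω'

/-- The pure stationary strategy of player 2 given by `j : Ω → J`, as a behavioral one. -/
noncomputable def pureStrat {Ω J : Type*} [DecidableEq J] (j : Ω → J) (ω : Ω) (j' : J) : ℝ :=
  if j' = j ω then 1 else 0

section helpers
variable {Ω I J : Type*} [Fintype Ω] [DecidableEq Ω] [Fintype I] [Fintype J]

lemma pureStrat_mem {J : Type*} [Fintype J] [DecidableEq J] (j : Ω → J) (ω : Ω) :
    pureStrat j ω ∈ stdSimplex ℝ J := by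
  constructor
  · intro j'; unfold pureStrat; split <;> norm_num
  · simp [pureStrat]

lemma mixedG_nonneg (g : Ω → I → J → ℝ) (hg : ∀ ω i j, g ω i j ∈ Set.Icc (0:ℝ) 1)
    {ω : Ω} {s : I → ℝ} {t : J → ℝ} (hs : ∀ i, 0 ≤ s i) (ht : ∀ j, 0 ≤ t j) :
    0 ≤ mixedG g ω s t := by
  refine Finset.sum_nonneg fun i _ => Finset.sum_nonneg fun j _ => ?_
  exact mul_nonneg (mul_nonneg (hs i) (ht j)) (hg ω i j).1

lemma mixedG_le_one (g : Ω → I → J → ℝ) (hg : ∀ ω i j, g ω i j ∈ Set.Icc (0:ℝ) 1)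
    {ω : Ω} {s : I → ℝ} {t : J → ℝ} (hs : s ∈ stdSimplex ℝ I) (ht : t ∈ stdSimplex ℝ J) :
    mixedG g ω s t ≤ 1 := by
  have : mixedG g ω s t ≤ ∑ i, ∑ j, s i * t j := by
    refine Finset.sum_le_sum fun i _ => Finset.sum_le_sum fun j _ => ?_
    have := mul_nonneg (hs.1 i) (ht.1 j)
    nlinarith [(hg ω i j).2, (hg ω i j).1]
  calc mixedG g ω s t ≤ ∑ i, ∑ j, s i * t j := this
    _ = (∑ i, s i) * (∑ j, t j) := by rw [Finset.sum_mul_sum]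
    _ = 1 := by rw [hs.2, ht.2, one_mul]

lemma mixedQ_nonneg (q : Ω → I → J → Ω → ℝ) (hq0 : ∀ ω i j ω', 0 ≤ q ω i j ω')
    {ω ω' : Ω} {s : I → ℝ} {t : J → ℝ} (hs : ∀ i, 0 ≤ s i) (ht : ∀ j, 0 ≤ t j) :
    0 ≤ mixedQ q ω s t ω' := by
  refine Finset.sum_nonneg fun i _ => Finset.sum_nonneg fun j _ => ?_
  exact mul_nonneg (mul_nonneg (hs i) (ht j)) (hq0 ω i j ω')

lemma sum_mixedQ (q : Ω → I → J → Ω → ℝ) (hq1 : ∀ ω i j, ∑ ω', q ω i j ω' = 1)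
    {ω : Ω} {s : I → ℝ} {t : J → ℝ} (hs : s ∈ stdSimplex ℝ I) (ht : t ∈ stdSimplex ℝ J) :
    ∑ ω', mixedQ q ω s t ω' = 1 := by
  unfold mixedQ
  rw [Finset.sum_comm]
  have : ∀ i, ∑ ω', ∑ j, s i * t j * q ω i j ω' = s i := by
    intro i
    rw [Finset.sum_comm]
    have : ∀ j, ∑ ω', s i * t j * q ω i j ω' = s i * t j := by
      intro j
      rw [← Finset.mul_sum, hq1 ω i j, mul_one]
    rw [Finset.sum_congr rfl fun j _ => this j, ← Finset.mul_sum, ht.2, mul_one]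
  rw [Finset.sum_congr rfl fun i _ => this i, hs.2]


open Classical in
lemma simplex_ne (K : Type*) [Fintype K] [Nonempty K] : Nonempty (stdSimplex ℝ K) := by
  refine ⟨⟨fun k => if k = Classical.arbitrary K then 1 else 0, ?_, ?_⟩⟩
  · intro k; dsimp; split <;> norm_num
  · simp

variable (g : Ω → I → J → ℝ) (q : Ω → I → J → Ω → ℝ)

/-- one-step expression bounds -/
lemma onestep_le (hg : ∀ ω i j, g ω i j ∈ Set.Icc (0:ℝ) 1)
    (hq0 : ∀ ω i j ω', 0 ≤ q ω i j ω') (hq1 : ∀ ω i j, ∑ ω', q ω i j ω' = 1)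
    {lam : ℝ} (hl0 : 0 ≤ lam) (hl1 : lam ≤ 1)
    {f : Ω → ℝ} {B : ℝ} (hf : ∀ ω', f ω' ≤ B) {ω : Ω} {s : I → ℝ} {t : J → ℝ}
    (hs : s ∈ stdSimplex ℝ I) (ht : t ∈ stdSimplex ℝ J) :
    lam * mixedG g ω s t + (1 - lam) * ∑ ω', mixedQ q ω s t ω' * f ω' ≤ lam + (1 - lam) * B := by
  have h1 : mixedG g ω s t ≤ 1 := mixedG_le_one g hg hs ht
  have h1' : 0 ≤ mixedG g ω s t := mixedG_nonneg g hg hs.1 ht.1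
  have h2 : ∑ ω', mixedQ q ω s t ω' * f ω' ≤ B := by
    calc ∑ ω', mixedQ q ω s t ω' * f ω' ≤ ∑ ω', mixedQ q ω s t ω' * B :=
          Finset.sum_le_sum fun ω' _ =>
            mul_le_mul_of_nonneg_left (hf ω') (mixedQ_nonneg q hq0 hs.1 ht.1)
      _ = B := by rw [← Finset.sum_mul, sum_mixedQ q hq1 hs ht, one_mul]
  have := sub_nonneg.mpr hl1
  nlinarith

lemma onestep_ge (hg : ∀ ω i j, g ω i j ∈ Set.Icc (0:ℝ) 1)
    (hq0 : ∀ ω i j ω', 0 ≤ q ω i j ω') (hq1 : ∀ ω i j, ∑ ω', q ω i j ω' = 1)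
    {lam : ℝ} (hl0 : 0 ≤ lam) (hl1 : lam ≤ 1)
    {f : Ω → ℝ} {m : ℝ} (hf : ∀ ω', m ≤ f ω') {ω : Ω} {s : I → ℝ} {t : J → ℝ}
    (hs : s ∈ stdSimplex ℝ I) (ht : t ∈ stdSimplex ℝ J) :
    (1 - lam) * m ≤ lam * mixedG g ω s t + (1 - lam) * ∑ ω', mixedQ q ω s t ω' * f ω' := by
  have h1 : 0 ≤ mixedG g ω s t := mixedG_nonneg g hg hs.1 ht.1
  have h2 : m ≤ ∑ ω', mixedQ q ω s t ω' * f ω' := by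
    calc m = ∑ ω', mixedQ q ω s t ω' * m := by
          rw [← Finset.sum_mul, sum_mixedQ q hq1 hs ht, one_mul]
      _ ≤ ∑ ω', mixedQ q ω s t ω' * f ω' :=
          Finset.sum_le_sum fun ω' _ =>
            mul_le_mul_of_nonneg_left (hf ω') (mixedQ_nonneg q hq0 hs.1 ht.1)
  have := sub_nonneg.mpr hl1
  nlinarith

variable [Nonempty Ω] [Nonempty I] [Nonempty J]

lemma shapleyOp_le (hg : ∀ ω i j, g ω i j ∈ Set.Icc (0:ℝ) 1)
    (hq0 : ∀ ω i j ω', 0 ≤ q ω i j ω') (hq1 : ∀ ω i j, ∑ ω', q ω i j ω' = 1)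
    {lam : ℝ} (hl0 : 0 ≤ lam) (hl1 : lam ≤ 1)
    {f : Ω → ℝ} {B : ℝ} (hf : ∀ ω', f ω' ≤ B) {m : ℝ} (hfm : ∀ ω', m ≤ f ω') (ω : Ω) :
    shapleyOp g q lam f ω ≤ lam + (1 - lam) * B := by
  haveI := simplex_ne I
  haveI := simplex_ne J
  refine ciSup_le fun s => ?_
  obtain ⟨t₀⟩ := simplex_ne J
  refine ciInf_le_of_le ⟨(1 - lam) * m, ?_⟩ t₀ (onestep_le g q hg hq0 hq1 hl0 hl1 hf s.2 t₀.2)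
  rintro z ⟨t, rfl⟩
  exact onestep_ge g q hg hq0 hq1 hl0 hl1 hfm s.2 t.2

lemma shapleyOp_ge (hg : ∀ ω i j, g ω i j ∈ Set.Icc (0:ℝ) 1)
    (hq0 : ∀ ω i j ω', 0 ≤ q ω i j ω') (hq1 : ∀ ω i j, ∑ ω', q ω i j ω' = 1)
    {lam : ℝ} (hl0 : 0 ≤ lam) (hl1 : lam ≤ 1)
    {f : Ω → ℝ} {B : ℝ} (hf : ∀ ω', f ω' ≤ B) {m : ℝ} (hfm : ∀ ω', m ≤ f ω') (ω : Ω)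
    (s : stdSimplex ℝ I) :
    (⨅ t : stdSimplex ℝ J,
      lam * mixedG g ω s.1 t.1 + (1 - lam) * ∑ ω', mixedQ q ω s.1 t.1 ω' * f ω')
      ≤ shapleyOp g q lam f ω := by
  haveI := simplex_ne I
  haveI := simplex_ne J
  refine le_ciSup_of_le ⟨lam + (1 - lam) * B, ?_⟩ s le_rfl
  rintro z ⟨s', rfl⟩
  obtain ⟨t₀⟩ := simplex_ne J
  exact ciInf_le_of_le ⟨(1 - lam) * m, by
    rintro z ⟨t, rfl⟩; exact onestep_ge g q hg hq0 hq1 hl0 hl1 hfm s'.2 t.2⟩ t₀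
    (onestep_le g q hg hq0 hq1 hl0 hl1 hf s'.2 t₀.2)

lemma v_bounds (hg : ∀ ω i j, g ω i j ∈ Set.Icc (0:ℝ) 1)
    (hq0 : ∀ ω i j ω', 0 ≤ q ω i j ω') (hq1 : ∀ ω i j, ∑ ω', q ω i j ω' = 1)
    {lam : ℝ} (hlam : lam ∈ Set.Ioc (0:ℝ) 1)
    {f : Ω → ℝ} (hf : shapleyOp g q lam f = f) : ∀ ω, f ω ∈ Set.Icc (0:ℝ) 1 := by
  obtain ⟨hl0, hl1⟩ := hlam
  obtain ⟨ωmax, hωmax⟩ := Finite.exists_max f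
  obtain ⟨ωmin, hωmin⟩ := Finite.exists_max (fun ω => -f ω)
  have hmin : ∀ ω', f ωmin ≤ f ω' := fun ω' => by have := hωmin ω'; simp at this; linarith
  have hmax1 : f ωmax ≤ 1 := by
    have h := shapleyOp_le g q hg hq0 hq1 hl0.le hl1 hωmax hmin ωmax
    rw [congrFun hf ωmax] at h
    nlinarith
  have hmin0 : 0 ≤ f ωmin := by
    have hkey : (1 - lam) * f ωmin ≤ f ωmin := by
      haveI := simplex_ne J
      obtain ⟨s₀⟩ := simplex_ne I
      have h1 := shapleyOp_ge g q hg hq0 hq1 hl0.le hl1 hωmax hmin ωmin s₀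
      have h2 : (1 - lam) * f ωmin ≤ ⨅ t : stdSimplex ℝ J,
          lam * mixedG g ωmin s₀.1 t.1 +
            (1 - lam) * ∑ ω', mixedQ q ωmin s₀.1 t.1 ω' * f ω' :=
        le_ciInf fun t => onestep_ge g q hg hq0 hq1 hl0.le hl1 hmin s₀.2 t.2
      rw [congrFun hf ωmin] at h1
      linarith
    nlinarith
  exact fun ω => ⟨hmin0.trans (hmin ω), (hωmax ω).trans hmax1⟩


/-- stochastic matrix powers -/
lemma pow_stoch (Q : Matrix Ω Ω ℝ) (h0 : ∀ a b, 0 ≤ Q a b) (h1 : ∀ a, ∑ b, Q a b = 1) :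
    ∀ n, (∀ a b, 0 ≤ (Q ^ n) a b) ∧ (∀ a, ∑ b, (Q ^ n) a b = 1) := by
  intro n
  induction n with
  | zero =>
    constructor
    · intro a b; simp [Matrix.one_apply]; split <;> norm_num
    · intro a; simp [Matrix.one_apply]
  | succ n ih =>
    have hmul : ∀ a b, (Q ^ (n+1)) a b = ∑ c, (Q ^ n) a c * Q c b := by
      intro a b; rw [pow_succ, Matrix.mul_apply]
    constructor
    · intro a b; rw [hmul]
      exact Finset.sum_nonneg fun c _ => mul_nonneg (ih.1 a c) (h0 c b)
    · intro a
      calc ∑ b, (Q ^ (n+1)) a b = ∑ b, ∑ c, (Q ^ n) a c * Q c b := by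
            exact Finset.sum_congr rfl fun b _ => hmul a b
        _ = ∑ c, ∑ b, (Q ^ n) a c * Q c b := Finset.sum_comm
        _ = ∑ c, (Q ^ n) a c := by
            refine Finset.sum_congr rfl fun c _ => ?_
            rw [← Finset.mul_sum, h1 c, mul_one]
        _ = 1 := ih.2 a

lemma pow_stoch_le_one (Q : Matrix Ω Ω ℝ) (h0 : ∀ a b, 0 ≤ Q a b) (h1 : ∀ a, ∑ b, Q a b = 1)
    (n : ℕ) (a b : Ω) : (Q ^ n) a b ≤ 1 := by
  have h := pow_stoch Q h0 h1 n
  calc (Q ^ n) a b ≤ ∑ c, (Q ^ n) a c :=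
        Finset.single_le_sum (fun c _ => h.1 a c) (Finset.mem_univ b)
    _ = 1 := h.2 a

lemma mixedG_eq_sum (g : Ω → I → J → ℝ) (a : Ω) (s : I → ℝ) (t : J → ℝ) :
    mixedG g a s t = ∑ j', t j' * ∑ i, s i * g a i j' := by
  unfold mixedG
  rw [Finset.sum_comm]
  refine Finset.sum_congr rfl fun j _ => ?_
  rw [Finset.mul_sum]
  exact Finset.sum_congr rfl fun i _ => by ring

lemma mixedQ_eq_sum (q : Ω → I → J → Ω → ℝ) (a : Ω) (s : I → ℝ) (t : J → ℝ) (b : Ω) :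
    mixedQ q a s t b = ∑ j', t j' * ∑ i, s i * q a i j' b := by
  unfold mixedQ
  rw [Finset.sum_comm]
  refine Finset.sum_congr rfl fun j _ => ?_
  rw [Finset.mul_sum]
  exact Finset.sum_congr rfl fun i _ => by ring

lemma mixedG_pure [DecidableEq J] (g : Ω → I → J → ℝ) (a : Ω) (s : I → ℝ) (j₀ : J) :
    mixedG g a s (fun j'' => if j'' = j₀ then 1 else 0) = ∑ i, s i * g a i j₀ := by
  rw [mixedG_eq_sum]
  rw [Finset.sum_congr rfl (fun j' _ => by
    show (if j' = j₀ then (1:ℝ) else 0) * _ = if j' = j₀ then ∑ i, s i * g a i j₀ else 0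
    split <;> simp_all)]
  rw [Finset.sum_ite_eq']
  simp

lemma mixedQ_pure [DecidableEq J] (q : Ω → I → J → Ω → ℝ) (a : Ω) (s : I → ℝ) (j₀ : J) (b : Ω) :
    mixedQ q a s (fun j'' => if j'' = j₀ then 1 else 0) b = ∑ i, s i * q a i j₀ b := by
  rw [mixedQ_eq_sum]
  rw [Finset.sum_congr rfl (fun j' _ => by
    show (if j' = j₀ then (1:ℝ) else 0) * _ = if j' = j₀ then ∑ i, s i * q a i j₀ b else 0
    split <;> simp_all)]
  rw [Finset.sum_ite_eq']
  simp

/-- linear decomposition of the one-step expression over pure actions of player 2 -/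
lemma onestep_eq_sum (g : Ω → I → J → ℝ) (q : Ω → I → J → Ω → ℝ) (lam : ℝ) (f : Ω → ℝ)
    (a : Ω) (s : I → ℝ) (t : J → ℝ) :
    lam * mixedG g a s t + (1 - lam) * ∑ b, mixedQ q a s t b * f b =
      ∑ j', t j' * (lam * (∑ i, s i * g a i j') +
        (1 - lam) * ∑ b, (∑ i, s i * q a i j' b) * f b) := by
  rw [mixedG_eq_sum]
  have hQ : ∑ b, mixedQ q a s t b * f b = ∑ j', t j' * ∑ b, (∑ i, s i * q a i j' b) * f b := by
    rw [Finset.sum_congr rfl (fun b _ => by rw [mixedQ_eq_sum, Finset.sum_mul])]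
    rw [Finset.sum_comm]
    refine Finset.sum_congr rfl fun j' _ => ?_
    rw [Finset.mul_sum]
    exact Finset.sum_congr rfl fun b _ => by ring
  rw [hQ, Finset.mul_sum, Finset.mul_sum, ← Finset.sum_add_distrib]
  exact Finset.sum_congr rfl fun j' _ => by ring

lemma iInf_gammaPay_le_v [DecidableEq J]
    (hg : ∀ ω i j, g ω i j ∈ Set.Icc (0:ℝ) 1)
    (hq0 : ∀ ω i j ω', 0 ≤ q ω i j ω') (hq1 : ∀ ω i j, ∑ ω', q ω i j ω' = 1)
    {lam : ℝ} (hlam : lam ∈ Set.Ioo (0:ℝ) 1)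
    {v : Ω → ℝ} (hv : shapleyOp g q lam v = v)
    {x : Ω → I → ℝ} (hx : ∀ a, x a ∈ stdSimplex ℝ I) (ω : Ω) :
    (⨅ j : Ω → J, gammaPay g q lam x (pureStrat j) ω) ≤ v ω := by
  haveI := simplex_ne J
  obtain ⟨hl0, hl1⟩ := hlam
  have hl1' : (0:ℝ) ≤ 1 - lam := by linarith
  have hv01 : ∀ a, v a ∈ Set.Icc (0:ℝ) 1 := v_bounds g q hg hq0 hq1 ⟨hl0, hl1.le⟩ hv
  -- the pure one-step evaluation
  set Ep : Ω → J → ℝ := fun a j' => lam * (∑ i, x a i * g a i j') +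
    (1 - lam) * ∑ b, (∑ i, x a i * q a i j' b) * v b with hEp
  -- choose a minimizing pure reply in each state
  have hmin : ∀ a, ∃ j₀ : J, ∀ j', Ep a j₀ ≤ Ep a j' := by
    intro a
    obtain ⟨j₀, -, hj₀⟩ := Finset.exists_min_image Finset.univ (Ep a) ⟨Classical.arbitrary J, Finset.mem_univ _⟩
    exact ⟨j₀, fun j' => hj₀ j' (Finset.mem_univ _)⟩
  choose jm hjm using hmin
  set y : Ω → J → ℝ := pureStrat jm with hy
  set Q : Matrix Ω Ω ℝ := Qmat q x y with hQdef
  set gt : Ω → ℝ := fun a => mixedG g a (x a) (y a) with hgt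
  have hy_eq : ∀ a, y a = fun j'' => if j'' = jm a then (1:ℝ) else 0 := fun a => rfl
  have hymem : ∀ a, y a ∈ stdSimplex ℝ J := fun a => pureStrat_mem jm a
  -- identification of Q and gt with the pure formulas
  have hgt_eq : ∀ a, gt a = ∑ i, x a i * g a i (jm a) := by
    intro a; rw [hgt]; show mixedG g a (x a) (y a) = _; rw [hy_eq a, mixedG_pure]
  have hQ_eq : ∀ a b, Q a b = ∑ i, x a i * q a i (jm a) b := by
    intro a b; show mixedQ q a (x a) (y a) b = _; rw [hy_eq a, mixedQ_pure]
  -- one step inequality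
  have hstep : ∀ a, lam * gt a + (1 - lam) * ∑ b, Q a b * v b ≤ v a := by
    intro a
    have h1 : (⨅ t : stdSimplex ℝ J,
        lam * mixedG g a (x a) t.1 + (1 - lam) * ∑ b, mixedQ q a (x a) t.1 b * v b) ≤ v a := by
      have := shapleyOp_ge g q hg hq0 hq1 hl0.le hl1.le (fun a => (hv01 a).2)
        (fun a => (hv01 a).1) a ⟨x a, hx a⟩
      rw [congrFun hv a] at this
      exact this
    have h2 : Ep a (jm a) ≤ ⨅ t : stdSimplex ℝ J,
        lam * mixedG g a (x a) t.1 + (1 - lam) * ∑ b, mixedQ q a (x a) t.1 b * v b := by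
      refine le_ciInf fun t => ?_
      rw [onestep_eq_sum]
      calc Ep a (jm a) = ∑ j', t.1 j' * Ep a (jm a) := by
            rw [← Finset.sum_mul, t.2.2, one_mul]
        _ ≤ ∑ j', t.1 j' * Ep a j' :=
            Finset.sum_le_sum fun j' _ => mul_le_mul_of_nonneg_left (hjm a j') (t.2.1 j')
    have h3 : Ep a (jm a) = lam * gt a + (1 - lam) * ∑ b, Q a b * v b := by
      rw [hEp, hgt_eq a]
      simp only []
      congr 1
      refine congrArg _ (Finset.sum_congr rfl fun b _ => ?_)
      rw [hQ_eq a b]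
    rw [← h3]
    exact h2.trans h1
  -- stochasticity of Q
  have hQ0 : ∀ a b, 0 ≤ Q a b := fun a b => mixedQ_nonneg q hq0 (hx a).1 (hymem a).1
  have hQ1 : ∀ a, ∑ b, Q a b = 1 := fun a => sum_mixedQ q hq1 (hx a) (hymem a)
  have hgt01 : ∀ a, gt a ∈ Set.Icc (0:ℝ) 1 := fun a =>
    ⟨mixedG_nonneg g hg (hx a).1 (hymem a).1, mixedG_le_one g hg (hx a) (hymem a)⟩
  -- iterates
  set G : ℕ → Ω → ℝ := fun m a => ∑ b, (Q ^ m) a b * gt b with hG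
  set T : ℕ → Ω → ℝ := fun n a => ∑ b, (Q ^ n) a b * v b with hT
  have hG01 : ∀ m a, G m a ∈ Set.Icc (0:ℝ) 1 := by
    intro m a
    constructor
    · exact Finset.sum_nonneg fun b _ => mul_nonneg ((pow_stoch Q hQ0 hQ1 m).1 a b) (hgt01 b).1
    · calc G m a ≤ ∑ b, (Q ^ m) a b := Finset.sum_le_sum fun b _ =>
            mul_le_of_le_one_right ((pow_stoch Q hQ0 hQ1 m).1 a b) (hgt01 b).2
        _ = 1 := (pow_stoch Q hQ0 hQ1 m).2 a
  have hT0 : ∀ n a, 0 ≤ T n a :=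
    fun n a => Finset.sum_nonneg fun b _ =>
      mul_nonneg ((pow_stoch Q hQ0 hQ1 n).1 a b) (hv01 b).1
  have claim1 : ∀ n a, lam * G n a + (1 - lam) * T (n+1) a ≤ T n a := by
    intro n a
    have hTT : T (n+1) a = ∑ b, ∑ c, (Q ^ n) a b * Q b c * v c := by
      rw [hT]; simp only []
      rw [Finset.sum_congr rfl (fun c _ => by
        rw [pow_succ, Matrix.mul_apply, Finset.sum_mul])]
      exact Finset.sum_comm
    have hexp : ∑ b, (Q ^ n) a b * (lam * gt b + (1 - lam) * ∑ c, Q b c * v c) =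
        lam * G n a + (1 - lam) * T (n+1) a := by
      rw [hTT, hG]
      simp only [mul_add, Finset.mul_sum, Finset.sum_add_distrib]
      congr 1
      · exact Finset.sum_congr rfl fun b _ => by ring
      · exact Finset.sum_congr rfl fun b _ => Finset.sum_congr rfl fun c _ => by ring
    calc lam * G n a + (1 - lam) * T (n+1) a
        = ∑ b, (Q ^ n) a b * (lam * gt b + (1 - lam) * ∑ c, Q b c * v c) := hexp.symm
      _ ≤ ∑ b, (Q ^ n) a b * v b := Finset.sum_le_sum fun b _ =>
          mul_le_mul_of_nonneg_left (hstep b) ((pow_stoch Q hQ0 hQ1 n).1 a b)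
      _ = T n a := rfl
  have claim2 : ∀ n a, ∑ m ∈ Finset.range n, lam * (1 - lam) ^ m * G m a ≤ v a := by
    have key : ∀ n a, ∑ m ∈ Finset.range n, lam * (1 - lam) ^ m * G m a
        + (1 - lam) ^ n * T n a ≤ v a := by
      intro n
      induction n with
      | zero =>
        intro a
        have : T 0 a = v a := by
          rw [hT]; simp only [pow_zero, Matrix.one_apply]
          rw [Finset.sum_congr rfl (fun b _ => by
            show (if a = b then (1:ℝ) else 0) * v b = if b = a then v b else 0
            by_cases h : a = b <;> simp [h, eq_comm])]
          rw [Finset.sum_ite_eq']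
          simp
        simp [this]
      | succ n ih =>
        intro a
        rw [Finset.sum_range_succ]
        have h1 := claim1 n a
        have h2 := ih a
        have hc : (0:ℝ) ≤ (1 - lam) ^ n := pow_nonneg hl1' n
        have h3 : (1 - lam) ^ n * (lam * G n a + (1 - lam) * T (n+1) a)
            ≤ (1 - lam) ^ n * T n a := mul_le_mul_of_nonneg_left h1 hc
        have h4 : lam * (1 - lam) ^ n * G n a + (1 - lam) ^ (n+1) * T (n+1) a =
            (1 - lam) ^ n * (lam * G n a + (1 - lam) * T (n+1) a) := by
          rw [pow_succ]; ring
        linarith [h3, h2, h4]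
    intro n a
    have h1 := key n a
    have hc : (0:ℝ) ≤ (1 - lam) ^ n := pow_nonneg hl1' n
    linarith [mul_nonneg hc (hT0 n a)]
  -- summability
  have hgeo : Summable fun m : ℕ => lam * (1 - lam) ^ m :=
    (summable_geometric_of_lt_one hl1' (by linarith)).mul_left lam
  have hsum : ∀ b, Summable (fun m => lam * (1 - lam) ^ m * (Q ^ m) ω b) := by
    intro b
    refine Summable.of_nonneg_of_le (fun m => ?_) (fun m => ?_) hgeo
    · exact mul_nonneg (mul_nonneg hl0.le (pow_nonneg hl1' m)) ((pow_stoch Q hQ0 hQ1 m).1 ω b)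
    · exact mul_le_of_le_one_right (mul_nonneg hl0.le (pow_nonneg hl1' m))
        (pow_stoch_le_one Q hQ0 hQ1 m ω b)
  -- gammaPay as a tsum
  have hgamma : gammaPay g q lam x y ω = ∑' m : ℕ, lam * (1 - lam) ^ m * G m ω := by
    unfold gammaPay discTime
    rw [← hQdef]
    rw [Finset.sum_congr rfl (fun b _ => by
      rw [show mixedG g b (x b) (y b) = gt b from rfl, ← tsum_mul_right])]
    rw [← Summable.tsum_finsetSum (fun b _ => (hsum b).mul_right (gt b))]
    refine tsum_congr fun m => ?_
    rw [hG]; simp only []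
    rw [Finset.mul_sum]
    exact Finset.sum_congr rfl fun b _ => by ring
  have hsumG : Summable (fun m => lam * (1 - lam) ^ m * G m ω) := by
    refine Summable.of_nonneg_of_le (fun m => ?_) (fun m => ?_) hgeo
    · exact mul_nonneg (mul_nonneg hl0.le (pow_nonneg hl1' m)) (hG01 m ω).1
    · exact mul_le_of_le_one_right (mul_nonneg hl0.le (pow_nonneg hl1' m)) (hG01 m ω).2
  have hfinal : gammaPay g q lam x y ω ≤ v ω := by
    rw [hgamma]
    exact Summable.tsum_le_of_sum_range_le hsumG fun n => claim2 n ω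
  -- conclude via the infimum
  refine ciInf_le_of_le ⟨0, ?_⟩ jm hfinal
  rintro z ⟨j, rfl⟩
  refine Finset.sum_nonneg fun b _ => mul_nonneg ?_
    (mixedG_nonneg g hg (hx b).1 (pureStrat_mem j b).1)
  refine tsum_nonneg fun m => ?_
  have hQ0' : ∀ a c, 0 ≤ Qmat q x (pureStrat j) a c :=
    fun a c => mixedQ_nonneg q hq0 (hx a).1 (pureStrat_mem j a).1
  have hQ1' : ∀ a, ∑ c, Qmat q x (pureStrat j) a c = 1 :=
    fun a => sum_mixedQ q hq1 (hx a) (pureStrat_mem j a)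
  exact mul_nonneg (mul_nonneg hl0.le (pow_nonneg hl1' m))
    ((pow_stoch _ hQ0' hQ1' m).1 ω b)

end helpers

/-- If a family `(x_λ)` of stationary strategies of player 1 guarantees (against all pure
stationary replies of player 2) `limsup_{μ→0} v_μ(ω) − ε` for all small `λ`, then
`liminf_{λ→0} v_λ(ω) ≥ limsup_{λ→0} v_λ(ω)`, so `lim_{λ→0} v_λ(ω)` exists. -/
theorem liminf_ge_limsup_of_guarantee
    {Ω I J : Type*} [Fintype Ω] [DecidableEq Ω] [Nonempty Ω]
    [Fintype I] [Nonempty I] [Fintype J] [DecidableEq J] [Nonempty J]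
    (g : Ω → I → J → ℝ) (q : Ω → I → J → Ω → ℝ)
    (hg : ∀ ω i j, g ω i j ∈ Set.Icc (0:ℝ) 1)
    (hq0 : ∀ ω i j ω', 0 ≤ q ω i j ω') (hq1 : ∀ ω i j, ∑ ω', q ω i j ω' = 1)
    (v : ℝ → Ω → ℝ) (hv : ∀ lam ∈ Set.Ioc (0:ℝ) 1, shapleyOp g q lam (v lam) = v lam)
    (x : ℝ → Ω → I → ℝ) (hx : ∀ lam ∈ Set.Ioc (0:ℝ) 1, ∀ ω, x lam ω ∈ stdSimplex ℝ I)
    (ω : Ω)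
    (h : ∀ ε > (0:ℝ), ∃ lam₀ ∈ Set.Ioc (0:ℝ) 1, ∀ lam ∈ Set.Ioo (0:ℝ) lam₀,
      (⨅ j : Ω → J, gammaPay g q lam (x lam) (pureStrat j) ω) ≥
        limsup (fun mu => v mu ω) (𝓝[>] (0:ℝ)) - ε) :
    liminf (fun lam => v lam ω) (𝓝[>] (0:ℝ)) ≥ limsup (fun lam => v lam ω) (𝓝[>] (0:ℝ)) ∧
    ∃ l : ℝ, Tendsto (fun lam => v lam ω) (𝓝[>] (0:ℝ)) (𝓝 l) := by
  have hev : ∀ᶠ lam in 𝓝[>] (0:ℝ), lam ∈ Set.Ioc (0:ℝ) 1 :=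
    Ioc_mem_nhdsGT_of_mem (by constructor <;> norm_num)
  have hb : ∀ᶠ lam in 𝓝[>] (0:ℝ), v lam ω ∈ Set.Icc (0:ℝ) 1 :=
    hev.mono fun lam hlam => v_bounds g q hg hq0 hq1 hlam (hv lam hlam) ω
  have hbdd : IsBoundedUnder (· ≤ ·) (𝓝[>] (0:ℝ)) (fun lam => v lam ω) :=
    ⟨1, eventually_map.mpr (hb.mono fun _ h => h.2)⟩
  have hbdd' : IsBoundedUnder (· ≥ ·) (𝓝[>] (0:ℝ)) (fun lam => v lam ω) :=
    ⟨0, eventually_map.mpr (hb.mono fun _ h => h.1)⟩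
  have key : ∀ ε > (0:ℝ), limsup (fun lam => v lam ω) (𝓝[>] (0:ℝ)) - ε ≤
      liminf (fun lam => v lam ω) (𝓝[>] (0:ℝ)) := by
    intro ε hε
    obtain ⟨lam₀, hlam₀, hguar⟩ := h ε hε
    have hev2 : ∀ᶠ lam in 𝓝[>] (0:ℝ), lam ∈ Set.Ioo (0:ℝ) lam₀ :=
      Ioo_mem_nhdsGT_of_mem ⟨le_rfl, hlam₀.1⟩
    have hev3 : ∀ᶠ lam in 𝓝[>] (0:ℝ),
        limsup (fun mu => v mu ω) (𝓝[>] (0:ℝ)) - ε ≤ v lam ω := by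
      refine hev2.mono fun lam hl => ?_
      have hmem : lam ∈ Set.Ioc (0:ℝ) 1 := ⟨hl.1, (hl.2.le.trans hlam₀.2)⟩
      have h2 : (⨅ j : Ω → J, gammaPay g q lam (x lam) (pureStrat j) ω) ≤ v lam ω :=
        iInf_gammaPay_le_v g q hg hq0 hq1 ⟨hl.1, lt_of_lt_of_le hl.2 hlam₀.2⟩
          (hv lam hmem) (hx lam hmem) ω
      exact le_trans (hguar lam hl) h2
    exact le_liminf_of_le hbdd.isCoboundedUnder_ge hev3
  have hLl : limsup (fun lam => v lam ω) (𝓝[>] (0:ℝ)) ≤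
      liminf (fun lam => v lam ω) (𝓝[>] (0:ℝ)) := by
    refine le_of_forall_pos_le_add fun ε hε => ?_
    have := key ε hε; linarith
  have hlL : liminf (fun lam => v lam ω) (𝓝[>] (0:ℝ)) ≤
      limsup (fun lam => v lam ω) (𝓝[>] (0:ℝ)) := liminf_le_limsup hbdd hbdd'
  exact ⟨hLl, ⟨limsup (fun lam => v lam ω) (𝓝[>] (0:ℝ)),
    tendsto_of_liminf_eq_limsup (le_antisymm hlL hLl) rfl hbdd hbdd'⟩⟩
end
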